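/- arXiv:2411.14597 — 3 statements merged into one kernel-verified Lean document; each statement's English description precedes it below -/
import Mathlib

section
/- Let A be the adjacency matrix of the subgraph of the Hamming cube \{0,1\}^n induced by the Hamming ball B(n,r) of radius r \le n/2 around 0. Then the maximal eigenvalue of A equals n - 2x, where x is the smallest root of the Krawtchouk polynomial K_{r+1}^{(n)}, this eigenvalue has multiplicity 1, and a corresponding eigenfunction can be chosen strictly positive and spherical (its value at a point depends only on the Hamming weight of the point). -/
/-!
The spherical function `f v = K_{|v|}(x₀) / C(n, |v|)` is an eigenfunction of the adjacency
matrix with eigenvalue `n - 2 x₀`: on weight classes, the eigenvalue equation is the three-term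
recurrence of the Krawtchouk polynomials, and `K_{r+1}(x₀) = 0` cuts it off at the boundary of
the ball. Below the smallest root of `K_{r+1}` the polynomials `K_0, …, K_r` are positive, so
`f > 0`. By Perron–Frobenius, a positive eigenvector of a nonnegative symmetric matrix carries
the largest eigenvalue, and, the ball being connected, it spans its eigenspace.
-/

/-- Generalized binomial coefficient `x choose l` as a real number. -/
noncomputable def gchoose (x : ℝ) (l : ℕ) : ℝ :=
  (∏ i ∈ Finset.range l, (x - i)) / (Nat.factorial l)

/-- Krawtchouk polynomial `K_j^{(n)}(x)`. -/
noncomputable def kraw (n j : ℕ) (x : ℝ) : ℝ :=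
  ∑ l ∈ Finset.range (j + 1), (-1 : ℝ) ^ l * gchoose x l * gchoose ((n : ℝ) - x) (j - l)

/-- Hamming weight of a Boolean vector. -/
def wt {n : ℕ} (x : Fin n → Bool) : ℕ :=
  (Finset.univ.filter (fun i => x i = true)).card

/-- Adjacency matrix of the subgraph of the Hamming cube induced by the
Hamming ball of radius `r` around `0`. -/
def ballAdj (n r : ℕ) :
    Matrix {x : Fin n → Bool // wt x ≤ r} {x : Fin n → Bool // wt x ≤ r} ℝ :=
  fun u v => if hammingDist u.1 v.1 = 1 then 1 else 0

open Finset Matrix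

lemma gchoose_zero (x : ℝ) : gchoose x 0 = 1 := by simp [gchoose]

lemma succ_mul_gchoose_succ (x : ℝ) (l : ℕ) :
    ((l : ℝ) + 1) * gchoose x (l + 1) = (x - l) * gchoose x l := by
  have hl : (l.factorial : ℝ) ≠ 0 := by positivity
  simp only [gchoose, prod_range_succ, Nat.factorial_succ, Nat.cast_mul, Nat.cast_succ]
  field_simp

lemma gchoose_pos {y : ℝ} {m : ℕ} (hy : (m : ℝ) - 1 < y) : 0 < gchoose y m := by
  induction m with
  | zero => simp [gchoose_zero]
  | succ m ih =>
    push_cast at hy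
    have h : 0 < ((m : ℝ) + 1) * gchoose y (m + 1) := by
      rw [succ_mul_gchoose_succ]; exact mul_pos (by linarith) (ih (by linarith))
    exact pos_of_mul_pos_right h (by positivity)

lemma gchoose_natCast_pos {n m : ℕ} (hm : m ≤ n) : 0 < gchoose n m := by
  have : (m : ℝ) ≤ n := by exact_mod_cast hm
  exact gchoose_pos (by linarith)

lemma neg_one_pow_mul_gchoose_nonneg {x : ℝ} (hx : x ≤ 0) (l : ℕ) :
    0 ≤ (-1) ^ l * gchoose x l := by
  induction l with
  | zero => simp [gchoose_zero]
  | succ l ih =>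
    have h : ((l : ℝ) + 1) * ((-1) ^ (l + 1) * gchoose x (l + 1))
        = (l - x) * ((-1) ^ l * gchoose x l) := by
      linear_combination (-(-1 : ℝ) ^ l) * succ_mul_gchoose_succ x l
    have : 0 ≤ ((l : ℝ) + 1) * ((-1) ^ (l + 1) * gchoose x (l + 1)) := by
      rw [h]; exact mul_nonneg (by linarith [(l.cast_nonneg : (0 : ℝ) ≤ l)]) ih
    exact nonneg_of_mul_nonneg_right this (by positivity)

lemma kraw_zero (n : ℕ) (x : ℝ) : kraw n 0 x = 1 := by
  simp [kraw, gchoose_zero]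

lemma kraw_one (n : ℕ) (x : ℝ) : kraw n 1 x = n - 2 * x := by
  have h0 := succ_mul_gchoose_succ (n - x) 0
  have h1 := succ_mul_gchoose_succ x 0
  simp only [Nat.cast_zero, zero_add, one_mul, sub_zero, gchoose_zero, mul_one] at h0 h1
  norm_num [kraw, sum_range_succ, gchoose_zero, h0, h1]
  ring

lemma kraw_eq_sum_antidiagonal (n j : ℕ) (x : ℝ) :
    kraw n j x = ∑ p ∈ antidiagonal j, (-1) ^ p.1 * gchoose x p.1 * gchoose (n - x) p.2 := by
  rw [kraw, Nat.sum_antidiagonal_eq_sum_range_succ_mk]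

/-- `ha`, `hb` say that `a`, `b` are the coefficients of `(1 - z) ^ x`, `(1 + z) ^ y`; the
recurrence is the coefficient form of `(1 - z ^ 2) F' = (y - x - (x + y) z) F` for their
product `F`. -/
theorem sum_antidiagonal_three_term_rec {R : Type*} [CommRing R] (a b : ℕ → R) (x y : R)
    (ha : ∀ l : ℕ, ((l : R) + 1) * a (l + 1) = (l - x) * a l)
    (hb : ∀ m : ℕ, ((m : R) + 1) * b (m + 1) = (y - m) * b m) (j : ℕ) :
    ((j : R) + 2) * ∑ p ∈ antidiagonal (j + 2), a p.1 * b p.2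
      = (y - x) * ∑ p ∈ antidiagonal (j + 1), a p.1 * b p.2
        + ((j : R) - x - y) * ∑ p ∈ antidiagonal j, a p.1 * b p.2 := by
  set c : ℕ → R := fun k => ∑ p ∈ antidiagonal k, a p.1 * b p.2
  set L : ℕ → R := fun k => ∑ p ∈ antidiagonal k, (p.1 : R) * (a p.1 * b p.2)
  set M : ℕ → R := fun k => ∑ p ∈ antidiagonal k, (p.2 : R) * (a p.1 * b p.2)
  have hLM : ∀ k, L k + M k = k * c k := by
    intro k
    simp only [L, M, c, ← sum_add_distrib, mul_sum]
    refine sum_congr rfl fun p hp => ?_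
    rw [← (mem_antidiagonal.1 hp)]
    push_cast; ring
  have hL : ∀ k, L (k + 1) = L k - x * c k := by
    intro k
    simp only [L, c, Nat.sum_antidiagonal_succ, mul_sum, ← sum_sub_distrib]
    push_cast
    simp only [zero_mul, zero_add]
    refine sum_congr rfl fun p _ => ?_
    linear_combination b p.2 * ha p.1
  have hM : ∀ k, M (k + 1) = y * c k - M k := by
    intro k
    simp only [M, c, Nat.sum_antidiagonal_succ', mul_sum, ← sum_sub_distrib]
    push_cast
    simp only [zero_mul, zero_add]
    refine sum_congr rfl fun p _ => ?_
    linear_combination a p.1 * hb p.2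
  show ((j : R) + 2) * c (j + 2) = (y - x) * c (j + 1) + ((j : R) - x - y) * c j
  have e := hLM (j + 2)
  rw [hL, hM, hL, hM] at e
  push_cast at e
  linear_combination -e + hLM j

lemma kraw_rec (n j : ℕ) (x : ℝ) :
    ((j : ℝ) + 2) * kraw n (j + 2) x
      = (n - 2 * x) * kraw n (j + 1) x - (n - j) * kraw n j x := by
  have h := sum_antidiagonal_three_term_rec (fun l => (-1) ^ l * gchoose x l) (gchoose (n - x))
    x (n - x) (fun l => by linear_combination (-(-1 : ℝ) ^ l) * succ_mul_gchoose_succ x l)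
    (succ_mul_gchoose_succ _) j
  simp only [kraw_eq_sum_antidiagonal]
  linear_combination h

lemma kraw_pos_of_nonpos {n j : ℕ} (hj : j ≤ n) {x : ℝ} (hx : x ≤ 0) : 0 < kraw n j x := by
  have hb : ∀ l, 0 < gchoose (n - x) (j - l) := fun l => by
    have : ((j - l : ℕ) : ℝ) ≤ n := by exact_mod_cast (j.sub_le l).trans hj
    exact gchoose_pos (by linarith)
  refine sum_pos' (fun l _ => mul_nonneg (neg_one_pow_mul_gchoose_nonneg hx l) (hb l).le)
    ⟨0, mem_range.2 j.succ_pos, ?_⟩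
  simpa [gchoose_zero] using hb 0

lemma continuous_kraw (n j : ℕ) : Continuous (kraw n j) := by
  unfold kraw gchoose
  fun_prop

lemma exists_kraw_eq_zero_of_neg {n j : ℕ} (hj : j ≤ n) {y : ℝ} (hy : kraw n j y < 0) :
    ∃ z ∈ Set.Ioo 0 y, kraw n j z = 0 := by
  have hy0 : 0 ≤ y := by
    by_contra! h
    exact (kraw_pos_of_nonpos hj h.le).not_gt hy
  exact intermediate_value_Ioo' hy0 (continuous_kraw n j).continuousOn
    ⟨hy, kraw_pos_of_nonpos hj le_rfl⟩

/-- By the recurrence, a zero of `K_{k+1}` at which `K_k > 0` makes `K_{k+2}` negative. -/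
lemma kraw_pos_of_forall_nonneg {n r : ℕ} (hrn : r + 1 ≤ n) {y : ℝ}
    (h : ∀ k ≤ r + 1, 0 ≤ kraw n k y) : ∀ k ≤ r, 0 < kraw n k y := by
  intro k
  induction k with
  | zero => simp [kraw_zero]
  | succ k ih =>
    intro hk
    refine (h (k + 1) (by omega)).lt_of_ne fun hzero => ?_
    have hrec := kraw_rec n k y
    rw [← hzero] at hrec
    have hnk : (0 : ℝ) < n - k := sub_pos.2 (by exact_mod_cast (by omega : k < n))
    nlinarith [mul_pos hnk (ih (by omega)), mul_nonneg (by positivity : (0 : ℝ) ≤ k + 2)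
      (h (k + 2) (by omega))]

/-- At the first point of `[0, x]` where one of `K_0, …, K_r` vanishes, all of
`K_0, …, K_{r+1}` would still be nonnegative. -/
theorem kraw_pos_of_le_roots {n r : ℕ} (hrn : r + 1 ≤ n) {x : ℝ}
    (hx : ∀ z, kraw n (r + 1) z = 0 → x ≤ z) : ∀ k ≤ r, 0 < kraw n k x := by
  by_contra! hbad
  set C := ⋃ k ∈ Set.Iic r, {y | kraw n k y ≤ 0}
  have hC : IsClosed C := (Set.finite_Iic r).isClosed_biUnion
    fun k _ => isClosed_le (continuous_kraw n k) continuous_const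
  have hmemC : ∀ y, y ∈ C ↔ ∃ k ≤ r, kraw n k y ≤ 0 := by simp [C]
  have hxC : x ∈ Set.Icc 0 x ∩ C := by
    obtain ⟨k, hk, hkx⟩ := hbad
    refine ⟨⟨?_, le_rfl⟩, (hmemC x).2 ⟨k, hk, hkx⟩⟩
    by_contra! h
    exact (kraw_pos_of_nonpos (by omega) h.le).not_ge hkx
  obtain ⟨y, ⟨⟨hy0, hyx⟩, hyC⟩, hleast⟩ := (isCompact_Icc.inter_right hC).exists_isLeast ⟨x, hxC⟩
  have hnonneg : ∀ k ≤ r + 1, 0 ≤ kraw n k y := by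
    intro k hk
    by_contra! hneg
    obtain ⟨z, ⟨hz0, hzy⟩, hz⟩ := exists_kraw_eq_zero_of_neg (by omega) hneg
    rcases Nat.lt_or_ge k (r + 1) with hkr | hkr
    · have : z ∈ Set.Icc 0 x ∩ C :=
        ⟨⟨hz0.le, hzy.le.trans hyx⟩, (hmemC z).2 ⟨k, by omega, hz.le⟩⟩
      exact (hleast this).not_gt hzy
    · obtain rfl : k = r + 1 := by omega
      exact (hx z hz).not_gt (hzy.trans_le hyx)
  obtain ⟨k, hk, hky⟩ := (hmemC y).1 hyC
  exact (kraw_pos_of_forall_nonneg hrn hnonneg k hk).not_ge hky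

/-- The spherical eigenfunction as a function of the weight `k`; `gchoose n k` is
`n.choose k`. -/
noncomputable def krawSpherical (n : ℕ) (x : ℝ) (k : ℕ) : ℝ := kraw n k x / gchoose n k

lemma krawSpherical_rec {n k : ℕ} (hk : k < n) (x : ℝ) :
    k * krawSpherical n x (k - 1) + (n - k) * krawSpherical n x (k + 1)
      = (n - 2 * x) * krawSpherical n x k := by
  unfold krawSpherical
  rcases k with _ | t
  · have h1 := succ_mul_gchoose_succ n 0
    simp only [Nat.cast_zero, zero_add, one_mul, sub_zero, gchoose_zero, mul_one] at h1
    have hn : (n : ℝ) ≠ 0 := by positivity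
    simp only [Nat.cast_zero, zero_mul, zero_add, sub_zero, h1, kraw_one, kraw_zero, gchoose_zero,
      div_one, mul_one]
    field_simp
  · have e1 := succ_mul_gchoose_succ n t
    have e2 := succ_mul_gchoose_succ n (t + 1)
    have hrec := kraw_rec n t x
    have hC₀ := (gchoose_natCast_pos (by omega : t ≤ n)).ne'
    have hC₁ := (gchoose_natCast_pos (by omega : t + 1 ≤ n)).ne'
    have hC₂ := (gchoose_natCast_pos (by omega : t + 2 ≤ n)).ne'
    simp only [Nat.add_sub_cancel]
    push_cast at e2 ⊢
    field_simp
    linear_combination kraw n t x * gchoose n (t + 2) * e1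
      - gchoose n t * kraw n (t + 2) x * e2 + gchoose n t * gchoose n (t + 2) * hrec

lemma krawSpherical_pos {n r : ℕ} (hrn : r + 1 ≤ n) {x : ℝ}
    (hx : ∀ z, kraw n (r + 1) z = 0 → x ≤ z) {k : ℕ} (hk : k ≤ r) : 0 < krawSpherical n x k :=
  div_pos (kraw_pos_of_le_roots hrn hx k hk) (gchoose_natCast_pos (by omega))

section Cube

variable {ι : Type*} [DecidableEq ι]

def flipAt (x : ι → Bool) (i : ι) : ι → Bool := Function.update x i (!x i)

lemma flipAt_apply_self (x : ι → Bool) (i : ι) : flipAt x i i = !x i := by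
  simp [flipAt]

lemma flipAt_apply_of_ne (x : ι → Bool) {i j : ι} (h : j ≠ i) : flipAt x i j = x j := by
  simp [flipAt, h]

lemma flipAt_injective (x : ι → Bool) : Function.Injective (flipAt x) := by
  intro i j hij
  by_contra hne
  have hi := congrFun hij i
  rw [flipAt_apply_self, flipAt_apply_of_ne x hne] at hi
  exact Bool.not_ne_self (x i) hi

variable [Fintype ι]

lemma hammingDist_eq_one_iff {x y : ι → Bool} : hammingDist x y = 1 ↔ ∃ i, y = flipAt x i := by
  rw [hammingDist, card_eq_one]
  refine exists_congr fun i => ⟨fun h => funext fun j => ?_, fun h => ?_⟩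
  · have hj := congrArg (j ∈ ·) h
    simp only [mem_filter, mem_univ, true_and, mem_singleton] at hj
    by_cases hji : j = i
    · subst hji; rw [flipAt_apply_self]; exact Bool.eq_not.2 (Ne.symm (by simpa using hj))
    · rw [flipAt_apply_of_ne x hji]; exact (by simpa [hji] using hj : x j = y j).symm
  · ext j
    by_cases hji : j = i
    · subst hji; simp [h, flipAt_apply_self]
    · simp [h, flipAt_apply_of_ne x hji, hji]

lemma sum_hammingDist_eq_one {M : Type*} [AddCommMonoid M] (x : ι → Bool)
    (G : (ι → Bool) → M) : ∑ y with hammingDist x y = 1, G y = ∑ i, G (flipAt x i) := by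
  have : univ.filter (fun y => hammingDist x y = 1) = univ.image (flipAt x) := by
    ext y
    simp only [mem_filter, mem_univ, true_and, mem_image, hammingDist_eq_one_iff]
    exact exists_congr fun i => eq_comm
  rw [this, sum_image fun i _ j _ h => flipAt_injective x h]

variable {n : ℕ}

lemma wt_flipAt_of_true {x : Fin n → Bool} {i : Fin n} (h : x i = true) :
    wt (flipAt x i) = wt x - 1 := by
  have : univ.filter (fun j => flipAt x i j = true)
      = (univ.filter fun j => x j = true).erase i := by
    ext j
    by_cases hji : j = i
    · subst hji; simp [flipAt_apply_self, h]
    · simp [flipAt_apply_of_ne x hji, hji]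
  rw [wt, this, card_erase_of_mem (by simp [h]), wt]

lemma wt_flipAt_of_false {x : Fin n → Bool} {i : Fin n} (h : x i = false) :
    wt (flipAt x i) = wt x + 1 := by
  have : univ.filter (fun j => flipAt x i j = true)
      = insert i (univ.filter fun j => x j = true) := by
    ext j
    by_cases hji : j = i
    · subst hji; simp [flipAt_apply_self, h]
    · simp [flipAt_apply_of_ne x hji, hji]
  rw [wt, this, card_insert_of_notMem (by simp [h]), wt]

lemma sum_comp_wt_flipAt (x : Fin n → Bool) (φ : ℕ → ℝ) :
    ∑ i, φ (wt (flipAt x i)) = wt x * φ (wt x - 1) + (n - wt x) * φ (wt x + 1) := by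
  have hφ : ∀ i, φ (wt (flipAt x i)) = if x i = true then φ (wt x - 1) else φ (wt x + 1) := by
    intro i
    cases hi : x i
    · simp [wt_flipAt_of_false hi]
    · simp [wt_flipAt_of_true hi]
  have hcard : (#{i | ¬ x i = true} : ℝ) = n - wt x := by
    rw [eq_sub_iff_add_eq, wt, ← Nat.cast_add, add_comm, card_filter_add_card_filter_not]
    simp
  simp only [hφ, sum_ite, sum_const, nsmul_eq_mul, hcard]
  rfl

end Cube

namespace Matrix

variable {ι : Type*} [Fintype ι] {A : Matrix ι ι ℝ}

lemma mem_eigenspace_toLin'_iff [DecidableEq ι] {μ : ℝ} {u : ι → ℝ} :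
    u ∈ Module.End.eigenspace (toLin' A) μ ↔ A *ᵥ u = μ • u := by
  rw [Module.End.mem_eigenspace_iff, toLin'_apply]

/-- Pair `|ν| • |u| ≤ A *ᵥ |u|` with `f`, moving `A` onto `f` by symmetry. -/
theorem abs_le_of_mulVec_eq_smul (hA : A.IsSymm) (hA0 : ∀ i j, 0 ≤ A i j) {f u : ι → ℝ}
    {μ ν : ℝ} (hf : A *ᵥ f = μ • f) (hf0 : ∀ i, 0 < f i) (hu : A *ᵥ u = ν • u) (hu0 : u ≠ 0) :
    |ν| ≤ μ := by
  set a : ι → ℝ := fun i => |u i|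
  have ha : ∀ i, |ν| * a i ≤ (A *ᵥ a) i := fun i =>
    calc |ν| * a i = |(A *ᵥ u) i| := by simp [a, hu, abs_mul]
      _ ≤ ∑ j, |A i j * u j| := abs_sum_le_sum_abs _ _
      _ = (A *ᵥ a) i := by simp [a, mulVec, dotProduct, abs_mul, abs_of_nonneg (hA0 _ _)]
  have hpos : 0 < f ⬝ᵥ a := by
    obtain ⟨i, hi⟩ := Function.ne_iff.1 hu0
    exact sum_pos' (fun j _ => mul_nonneg (hf0 j).le (abs_nonneg _))
      ⟨i, mem_univ i, mul_pos (hf0 i) (abs_pos.2 hi)⟩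
  have key : |ν| * (f ⬝ᵥ a) ≤ μ * (f ⬝ᵥ a) :=
    calc |ν| * (f ⬝ᵥ a) = f ⬝ᵥ (|ν| • a) := by rw [dotProduct_smul, smul_eq_mul]
      _ ≤ f ⬝ᵥ (A *ᵥ a) := sum_le_sum fun i _ => mul_le_mul_of_nonneg_left (ha i) (hf0 i).le
      _ = (A *ᵥ f) ⬝ᵥ a := by rw [dotProduct_mulVec, ← vecMul_transpose, hA.eq]
      _ = μ * (f ⬝ᵥ a) := by rw [hf, smul_dotProduct, smul_eq_mul]
  exact le_of_mul_le_mul_right key hpos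

lemma apply_eq_zero_of_mulVec_eq_smul (hA0 : ∀ i j, 0 ≤ A i j) {h : ι → ℝ} {μ : ℝ}
    (hh : A *ᵥ h = μ • h) (hh0 : ∀ i, 0 ≤ h i) {i j : ι} (hi : h i = 0)
    (hij : Relation.ReflTransGen (fun a b => 0 < A a b) i j) : h j = 0 := by
  induction hij with
  | refl => exact hi
  | @tail b c _ hbc ih =>
    have hsum : ∑ k, A b k * h k = 0 := by
      simpa [ih, mulVec, dotProduct] using congrFun hh b
    have hc := (sum_eq_zero_iff_of_nonneg fun k _ => mul_nonneg (hA0 b k) (hh0 k)).1 hsum c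
      (mem_univ c)
    exact (mul_eq_zero.1 hc).resolve_left hbc.ne'

/-- Uniqueness half of Perron–Frobenius: subtracting the largest multiple of the positive
eigenvector `f` from an eigenvector leaves a nonnegative eigenvector vanishing somewhere,
hence everywhere by irreducibility. -/
theorem eigenspace_toLin'_eq_span_singleton [DecidableEq ι] [Nonempty ι]
    (hA0 : ∀ i j, 0 ≤ A i j) (hirr : ∀ i j, Relation.ReflTransGen (fun a b => 0 < A a b) i j)
    {f : ι → ℝ} {μ : ℝ} (hf : A *ᵥ f = μ • f) (hf0 : ∀ i, 0 < f i) :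
    Module.End.eigenspace (toLin' A) μ = Submodule.span ℝ {f} := by
  refine le_antisymm (fun u hu => ?_) ((Submodule.span_singleton_le_iff_mem _ _).2
    (mem_eigenspace_toLin'_iff.2 hf))
  rw [mem_eigenspace_toLin'_iff] at hu
  obtain ⟨i₀, -, hmin⟩ := exists_min_image univ (fun i => u i / f i) univ_nonempty
  set c := u i₀ / f i₀
  have hh : A *ᵥ (u - c • f) = μ • (u - c • f) := by
    rw [mulVec_sub, mulVec_smul, hu, hf, smul_sub, smul_comm]
  have hh0 : ∀ i, 0 ≤ (u - c • f) i := fun i => by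
    simpa using (le_div_iff₀ (hf0 i)).1 (hmin i (mem_univ i))
  have hi₀ : (u - c • f) i₀ = 0 := by
    simp [c, div_mul_cancel₀ _ (hf0 i₀).ne']
  have hzero : u - c • f = 0 := funext fun j =>
    apply_eq_zero_of_mulVec_eq_smul hA0 hh hh0 hi₀ (hirr i₀ j)
  exact Submodule.mem_span_singleton.2 ⟨c, (sub_eq_zero.1 hzero).symm⟩

end Matrix

section Ball

variable {n r : ℕ}

def ballZero (n r : ℕ) : {x : Fin n → Bool // wt x ≤ r} := ⟨fun _ => false, by simp [wt]⟩

instance : Nonempty {x : Fin n → Bool // wt x ≤ r} := ⟨ballZero n r⟩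

lemma ballAdj_isSymm : (ballAdj n r).IsSymm :=
  Matrix.IsSymm.ext fun v w => by simp [ballAdj, hammingDist_comm]

lemma ballAdj_nonneg (v w : {x : Fin n → Bool // wt x ≤ r}) : 0 ≤ ballAdj n r v w := by
  unfold ballAdj; split_ifs <;> norm_num

lemma ballAdj_reflTransGen (v w : {x : Fin n → Bool // wt x ≤ r}) :
    Relation.ReflTransGen (fun a b => 0 < ballAdj n r a b) v w := by
  set o := ballZero n r
  have key : ∀ k, ∀ v : {x : Fin n → Bool // wt x ≤ r}, wt v.1 = k →
      Relation.ReflTransGen (fun a b => 0 < ballAdj n r a b) v o ∧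
      Relation.ReflTransGen (fun a b => 0 < ballAdj n r a b) o v := by
    intro k
    induction k with
    | zero =>
      intro v hv
      have hv : ∀ i, v.1 i = false := by simpa [wt, card_eq_zero, filter_eq_empty_iff] using hv
      obtain rfl : v = o := Subtype.ext (funext hv)
      exact ⟨.refl, .refl⟩
    | succ k ih =>
      intro v hv
      obtain ⟨i, hi⟩ : ∃ i, v.1 i = true := by
        simpa [wt, card_pos, Finset.Nonempty] using (hv ▸ k.succ_pos : 0 < wt v.1)
      have hvr := v.2
      set w : {x : Fin n → Bool // wt x ≤ r} :=
        ⟨flipAt v.1 i, by rw [wt_flipAt_of_true hi]; omega⟩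
      obtain ⟨hwo, how⟩ := ih w (by simp only [w, wt_flipAt_of_true hi, hv, Nat.add_sub_cancel])
      have hvw : 0 < ballAdj n r v w := by simp [ballAdj, w, hammingDist_eq_one_iff]
      have hwv : 0 < ballAdj n r w v := by rwa [ballAdj_isSymm.apply]
      exact ⟨hwo.head hvw, how.tail hwv⟩
  exact (key _ v rfl).1.trans (key _ w rfl).2

lemma ballAdj_mulVec_comp_wt (g : ℕ → ℝ) (hg : g (r + 1) = 0)
    (v : {x : Fin n → Bool // wt x ≤ r}) :
    (ballAdj n r *ᵥ fun w => g (wt w.1)) v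
      = wt v.1 * g (wt v.1 - 1) + (n - wt v.1) * g (wt v.1 + 1) := by
  set φ : ℕ → ℝ := fun k => if k ≤ r then g k else 0
  calc (ballAdj n r *ᵥ fun w => g (wt w.1)) v
      = ∑ w : {x : Fin n → Bool // wt x ≤ r},
          if hammingDist v.1 w.1 = 1 then g (wt w.1) else 0 := by
        simp [mulVec, dotProduct, ballAdj]
    _ = ∑ y with wt y ≤ r, if hammingDist v.1 y = 1 then g (wt y) else 0 :=
        (sum_subtype _ (by simp) (fun y => if hammingDist v.1 y = 1 then g (wt y) else 0)).symm
    _ = ∑ y with hammingDist v.1 y = 1, φ (wt y) := by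
        rw [sum_filter, sum_filter]
        refine sum_congr rfl fun y _ => ?_
        simp only [φ]
        split_ifs <;> rfl
    _ = wt v.1 * φ (wt v.1 - 1) + (n - wt v.1) * φ (wt v.1 + 1) := by
        rw [sum_hammingDist_eq_one, sum_comp_wt_flipAt]
    _ = wt v.1 * g (wt v.1 - 1) + (n - wt v.1) * g (wt v.1 + 1) := by
        have hv := v.2
        have h₁ : φ (wt v.1 - 1) = g (wt v.1 - 1) := if_pos (by omega)
        have h₂ : φ (wt v.1 + 1) = g (wt v.1 + 1) := by
          simp only [φ]
          split_ifs with h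
          · rfl
          · rw [show wt v.1 = r by omega, hg]
        rw [h₁, h₂]

end Ball

theorem ball_max_eigenvalue (n r : ℕ) (hn : 0 < n) (hr : 2 * r ≤ n)
    (x₀ : ℝ) (hroot : kraw n (r + 1) x₀ = 0)
    (hmin : ∀ x : ℝ, kraw n (r + 1) x = 0 → x₀ ≤ x) :
    Module.End.HasEigenvalue (Matrix.toLin' (ballAdj n r)) ((n : ℝ) - 2 * x₀) ∧
    (∀ μ : ℝ, Module.End.HasEigenvalue (Matrix.toLin' (ballAdj n r)) μ →
      μ ≤ (n : ℝ) - 2 * x₀) ∧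
    Module.finrank ℝ
      (Module.End.eigenspace (Matrix.toLin' (ballAdj n r)) ((n : ℝ) - 2 * x₀)) = 1 ∧
    ∃ f ∈ Module.End.eigenspace (Matrix.toLin' (ballAdj n r)) ((n : ℝ) - 2 * x₀),
      (∀ v, 0 < f v) ∧ ∀ v w, wt v.1 = wt w.1 → f v = f w := by
  have hrn : r + 1 ≤ n := by omega
  set f : {x : Fin n → Bool // wt x ≤ r} → ℝ := fun v => krawSpherical n x₀ (wt v.1)
  have hf0 : ∀ v, 0 < f v := fun v => krawSpherical_pos hrn hmin v.2
  have hf : ballAdj n r *ᵥ f = ((n : ℝ) - 2 * x₀) • f := funext fun v => by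
    rw [ballAdj_mulVec_comp_wt _ (by simp [krawSpherical, hroot]),
      krawSpherical_rec (by have := v.2; omega)]
    rfl
  have hfmem := mem_eigenspace_toLin'_iff.2 hf
  have hfne : f ≠ 0 := fun h => (hf0 (ballZero n r)).ne' (congrFun h _)
  refine ⟨Module.End.hasEigenvalue_of_hasEigenvector ⟨hfmem, hfne⟩, fun μ hμ => ?_, ?_,
    f, hfmem, hf0, fun v w h => by simp only [f, h]⟩
  · obtain ⟨u, hu, hu0⟩ := hμ.exists_hasEigenvector
    exact (le_abs_self μ).trans (abs_le_of_mulVec_eq_smul ballAdj_isSymm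
      ballAdj_nonneg hf hf0 (mem_eigenspace_toLin'_iff.1 hu) hu0)
  · rw [eigenspace_toLin'_eq_span_singleton ballAdj_nonneg ballAdj_reflTransGen hf hf0]
    exact finrank_span_singleton hfne
end

section
/- Let 1 \le r \le n/2 and let A be the adjacency matrix of the bipartite graph on S(n,r-1) \cup S(n,r) (the union of the two Hamming spheres of radii r-1 and r), where two vertices are adjacent iff their Hamming distance is 1. Then for each 0 \le t \le r-1, the numbers \pm\sqrt{(r-t)(n-r-t+1)} are eigenvalues of A with multiplicity \binom{n}{t} - \binom{n}{t-1} each, and 0 is an eigenvalue with multiplicity \binom{n}{r} - \binom{n}{r-1}; these account for all eigenvalues. -/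
/-- Adjacency matrix of the subgraph of the Hamming cube induced by the union
of the Hamming spheres of radii `r-1` and `r`. -/
def twoSphereAdj (n r : ℕ) :
    Matrix {x : Fin n → Bool // wt x = r - 1 ∨ wt x = r}
      {x : Fin n → Bool // wt x = r - 1 ∨ wt x = r} ℝ :=
  fun u v => if hammingDist u.1 v.1 = 1 then 1 else 0

/-- `binom(n,t) - binom(n,t-1)`, with `binom(n,-1) := 0`. -/
def dimV (n t : ℕ) : ℕ :=
  if t = 0 then 1 else Nat.choose n t - Nat.choose n (t - 1)

/-!
Identify a Boolean vector with its support. With `k = r - 1`, the two spheres become the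
`k`- and `k + 1`-subsets of `Fin n`, and after reordering the vertices `A` is the block matrix
`[[0, Wᵀ], [W, 0]]`, where `W = Wₖ` is the inclusion matrix of `k`-sets in `k + 1`-sets. For
`μ ≠ 0` its `μ`-eigenspace is isomorphic to the `μ²`-eigenspace of `Wᵀ W`, and its kernel is
`ker Wᵀ`, since `W` is injective for `2k < n`.

Counting common neighbours gives `Wₖ₊₁ᵀ Wₖ₊₁ = Wₖ Wₖᵀ + (n - 2(k + 1)) I`. As `Wₖ Wₖᵀ` and
`Wₖᵀ Wₖ` have the same nonzero eigenspace dimensions, induction on `k` yields the spectrum of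
`Wₖᵀ Wₖ`: the eigenvalues `(k + 1 - t)(n - k - t)` for `t ≤ k`, with multiplicities
`C(n, t) - C(n, t - 1)`. The same identity shows `Wₖᵀ Wₖ` positive definite for `2k < n`.
-/

open Matrix Module Finset

section Eigenspaces

variable {K : Type*} [Field K] {m l : Type*} [Fintype m] [DecidableEq m] [Fintype l]
  [DecidableEq l]

theorem Submodule.finrank_eq_of_inverse_on {V W : Type*} [AddCommGroup V] [Module K V]
    [AddCommGroup W] [Module K W] {p : Submodule K V} {q : Submodule K W} (F : V →ₗ[K] W)
    (G : W →ₗ[K] V) (hF : ∀ x ∈ p, F x ∈ q) (hG : ∀ y ∈ q, G y ∈ p)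
    (hGF : ∀ x ∈ p, G (F x) = x) (hFG : ∀ y ∈ q, F (G y) = y) :
    finrank K p = finrank K q :=
  LinearEquiv.finrank_eq <| LinearEquiv.ofLinearMap
    (f := (F.domRestrict p).codRestrict q fun x => hF x x.2)
    (g := (G.domRestrict q).codRestrict p fun y => hG y y.2)
    (LinearMap.ext fun y => Subtype.ext (hFG y y.2))
    (LinearMap.ext fun x => Subtype.ext (hGF x x.2))

theorem Module.End.hasEigenvalue_iff_finrank_pos {V : Type*} [AddCommGroup V] [Module K V]
    [FiniteDimensional K V] {f : End K V} {μ : K} :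
    f.HasEigenvalue μ ↔ 0 < finrank K (f.eigenspace μ) := by
  rw [hasEigenvalue_iff, Nat.pos_iff_ne_zero, Ne, Ne, Submodule.finrank_eq_zero]

theorem Matrix.mem_eigenspace_toLin' {M : Matrix m m K} {μ : K} {v : m → K} :
    v ∈ End.eigenspace (toLin' M) μ ↔ M *ᵥ v = μ • v := by
  rw [End.mem_eigenspace_iff, toLin'_apply]

theorem Matrix.eigenspace_toLin'_add_smul_one (M : Matrix m m K) (μ c : K) :
    End.eigenspace (toLin' (M + c • 1)) (μ + c) = End.eigenspace (toLin' M) μ := by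
  ext v
  simp only [mem_eigenspace_toLin', add_mulVec, smul_mulVec, one_mulVec, add_smul,
    add_left_inj]

theorem Matrix.finrank_eigenspace_submatrix_equiv (M : Matrix m m K) (e : l ≃ m) (μ : K) :
    finrank K (End.eigenspace (toLin' (M.submatrix e e)) μ) =
      finrank K (End.eigenspace (toLin' M) μ) := by
  refine Submodule.finrank_eq_of_inverse_on (LinearMap.funLeft K K e.symm)
    (LinearMap.funLeft K K e) (fun v hv => ?_) (fun w hw => ?_) (fun v _ => ?_) (fun w _ => ?_)
  · rw [mem_eigenspace_toLin', submatrix_mulVec_equiv] at hv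
    rw [mem_eigenspace_toLin']
    change M *ᵥ (v ∘ e.symm) = μ • (v ∘ e.symm)
    ext i
    simpa using congrFun hv (e.symm i)
  · rw [mem_eigenspace_toLin'] at hw ⊢
    change M.submatrix e e *ᵥ (w ∘ e) = μ • (w ∘ e)
    ext i
    simpa [submatrix_mulVec_equiv, Function.comp_def] using congrFun hw (e i)
  · ext i; simp [LinearMap.funLeft_apply]
  · ext i; simp [LinearMap.funLeft_apply]

/-- `B` maps the `μ`-eigenvectors of `A * B` to those of `B * A`, and `μ⁻¹ • A` maps them
back. -/
theorem Matrix.finrank_eigenspace_mul_comm (A : Matrix m l K) (B : Matrix l m K) {μ : K}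
    (hμ : μ ≠ 0) :
    finrank K (End.eigenspace (toLin' (A * B)) μ) =
      finrank K (End.eigenspace (toLin' (B * A)) μ) := by
  refine Submodule.finrank_eq_of_inverse_on B.mulVecLin (μ⁻¹ • A.mulVecLin) ?_ ?_ ?_ ?_ <;>
    intro x hx <;>
    simp only [mem_eigenspace_toLin', LinearMap.smul_apply, mulVecLin_apply, mulVec_smul,
      ← mulVec_mulVec] at hx ⊢
  · rw [hx, mulVec_smul]
  · rw [hx, mulVec_smul, smul_smul, smul_smul, mul_comm]
  · rw [hx, inv_smul_smul₀ hμ]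
  · rw [hx, inv_smul_smul₀ hμ]

theorem Matrix.mem_eigenspace_fromBlocks_zero_zero {P : Matrix m l K} {Q : Matrix l m K}
    {μ : K} {v : m ⊕ l → K} :
    v ∈ End.eigenspace (toLin' (fromBlocks 0 P Q 0)) μ ↔
      P *ᵥ (v ∘ Sum.inr) = μ • (v ∘ Sum.inl) ∧ Q *ᵥ (v ∘ Sum.inl) = μ • (v ∘ Sum.inr) := by
  rw [mem_eigenspace_toLin', fromBlocks_mulVec]
  simp only [zero_mulVec, zero_add, add_zero]
  refine ⟨fun h => ⟨funext fun i => congrFun h (.inl i), funext fun i => congrFun h (.inr i)⟩,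
    fun ⟨h₁, h₂⟩ => ?_⟩
  ext (i | i)
  · exact congrFun h₁ i
  · exact congrFun h₂ i

/-- The eigenvectors of `fromBlocks 0 P Q 0` for `μ ≠ 0` are the vectors `(x, μ⁻¹ • Q x)` with
`x` an eigenvector of `P * Q` for `μ ^ 2`. -/
theorem Matrix.finrank_eigenspace_fromBlocks_zero_zero (P : Matrix m l K) (Q : Matrix l m K)
    {μ : K} (hμ : μ ≠ 0) :
    finrank K (End.eigenspace (toLin' (fromBlocks 0 P Q 0)) μ) =
      finrank K (End.eigenspace (toLin' (P * Q)) (μ ^ 2)) := by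
  let G : (m → K) →ₗ[K] m ⊕ l → K :=
    (LinearEquiv.sumArrowLequivProdArrow m l K K).symm.toLinearMap ∘ₗ
      LinearMap.id.prod (μ⁻¹ • Q.mulVecLin)
  have hG₁ (x : m → K) : G x ∘ Sum.inl = x := rfl
  have hG₂ (x : m → K) : G x ∘ Sum.inr = μ⁻¹ • Q *ᵥ x := rfl
  refine Submodule.finrank_eq_of_inverse_on (LinearMap.funLeft K K Sum.inl) G (fun v hv => ?_)
    (fun x hx => ?_) (fun v hv => ?_) (fun x _ => hG₁ x)
  · rw [mem_eigenspace_fromBlocks_zero_zero] at hv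
    rw [mem_eigenspace_toLin', ← mulVec_mulVec]
    change P *ᵥ (Q *ᵥ (v ∘ Sum.inl)) = μ ^ 2 • (v ∘ Sum.inl)
    rw [hv.2, mulVec_smul, hv.1, smul_smul, sq]
  · rw [mem_eigenspace_toLin', ← mulVec_mulVec] at hx
    rw [mem_eigenspace_fromBlocks_zero_zero, hG₁, hG₂, mulVec_smul, hx, smul_smul, smul_smul,
      sq, inv_mul_cancel_left₀ hμ, mul_inv_cancel₀ hμ, one_smul]
    exact ⟨rfl, rfl⟩
  · rw [mem_eigenspace_fromBlocks_zero_zero] at hv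
    ext (i | i)
    · rfl
    · change (G (v ∘ Sum.inl) ∘ Sum.inr) i = v (Sum.inr i)
      rw [hG₂, hv.2, inv_smul_smul₀ hμ]
      rfl

theorem Matrix.finrank_eigenspace_zero_fromBlocks_zero_zero (P : Matrix m l K)
    {Q : Matrix l m K} (hQ : LinearMap.ker Q.mulVecLin = ⊥) :
    finrank K (End.eigenspace (toLin' (fromBlocks 0 P Q 0)) 0) =
      finrank K (LinearMap.ker P.mulVecLin) := by
  let G : (l → K) →ₗ[K] m ⊕ l → K :=
    (LinearEquiv.sumArrowLequivProdArrow m l K K).symm.toLinearMap ∘ₗ LinearMap.inr K _ _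
  refine Submodule.finrank_eq_of_inverse_on (LinearMap.funLeft K K Sum.inr) G (fun v hv => ?_)
    (fun y hy => ?_) (fun v hv => ?_) (fun y _ => rfl)
  · rw [mem_eigenspace_fromBlocks_zero_zero, zero_smul] at hv
    exact hv.1
  · rw [mem_eigenspace_fromBlocks_zero_zero, zero_smul, zero_smul]
    exact ⟨hy, Q.mulVec_zero⟩
  · rw [mem_eigenspace_fromBlocks_zero_zero, zero_smul, zero_smul] at hv
    have hv₁ : v ∘ Sum.inl = 0 := (LinearMap.ker_eq_bot'.mp hQ) _ hv.2
    ext (i | i)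
    · exact (congrFun hv₁ i).symm
    · rfl

theorem Matrix.hasEigenvalue_toLin'_mul_comm (A : Matrix m l K) (B : Matrix l m K) {μ : K}
    (hμ : μ ≠ 0) :
    End.HasEigenvalue (toLin' (A * B)) μ ↔ End.HasEigenvalue (toLin' (B * A)) μ := by
  rw [End.hasEigenvalue_iff_finrank_pos, End.hasEigenvalue_iff_finrank_pos,
    finrank_eigenspace_mul_comm A B hμ]

end Eigenspaces

namespace Finset

variable {α : Type*} [DecidableEq α]

theorem card_symmDiff_add_card_left (s t : Finset α) :
    #(symmDiff s t) + #s = 2 * #(s \ t) + #t := by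
  rw [symmDiff_def, sup_eq_union, card_union_of_disjoint disjoint_sdiff_sdiff]
  have h₁ := card_sdiff_add_card_inter s t
  have h₂ := card_sdiff_add_card_inter t s
  rw [inter_comm] at h₂
  omega

variable {s t : Finset α}

theorem card_symmDiff_ne_one_of_card_eq (h : #s = #t) : #(symmDiff s t) ≠ 1 := by
  have := card_symmDiff_add_card_left s t
  omega

theorem card_symmDiff_eq_one_iff_subset (h : #t = #s + 1) : #(symmDiff s t) = 1 ↔ s ⊆ t := by
  have := card_symmDiff_add_card_left s t
  rw [← sdiff_eq_empty_iff_subset, ← card_eq_zero]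
  omega

variable [Fintype α]

theorem card_filter_superset_powersetCard_succ {k : ℕ} (hs : #s = k) :
    #{z ∈ powersetCard (k + 1) (univ : Finset α) | s ⊆ z} = Fintype.card α - k := by
  have : {z ∈ powersetCard (k + 1) (univ : Finset α) | s ⊆ z} =
      sᶜ.image fun a : α => insert a s := by
    ext z
    simp only [mem_filter, mem_powersetCard_univ, mem_image, mem_compl, ← hs]
    rw [exists_eq_insert_iff]
    tauto
  rw [this, card_image_of_injOn (insert_inj_on' s), card_compl, hs]

theorem card_filter_union_subset_powersetCard {x y : Finset α} {k : ℕ} (hx : #x = k + 1)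
    (hy : #y = k + 1) (hxy : x ≠ y) :
    #{z ∈ powersetCard (k + 2) (univ : Finset α) | x ∪ y ⊆ z} = (#(x ∩ y)).choose k := by
  have hunion := card_union_add_card_inter x y
  have hinter : #(x ∩ y) < k + 1 := by
    rw [← hx]
    refine card_lt_card (inter_subset_left.ssubset_of_ne fun h => hxy ?_)
    exact eq_of_subset_of_card_le (inter_eq_left.mp h) (hx.trans hy.symm).ge
  rcases (Nat.lt_succ_iff.mp hinter).eq_or_lt with h | h
  · rw [h, Nat.choose_self, card_eq_one]
    refine ⟨x ∪ y, ?_⟩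
    ext z
    simp only [mem_filter, mem_powersetCard_univ, mem_singleton]
    constructor
    · rintro ⟨hz, hsub⟩
      exact (eq_of_subset_of_card_le hsub (by omega)).symm
    · rintro rfl
      exact ⟨by omega, subset_rfl⟩
  · rw [Nat.choose_eq_zero_of_lt h, card_eq_zero, filter_eq_empty_iff]
    intro z hz hsub
    have := card_le_card hsub
    rw [mem_powersetCard_univ] at hz
    omega

end Finset

section InclusionMatrix

variable {α : Type*} [Fintype α]

theorem sum_subtype_card_eq_sum_powersetCard {M : Type*} [AddCommMonoid M] (k : ℕ)
    (f : Finset α → M) :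
    ∑ s : {s : Finset α // #s = k}, f s = ∑ s ∈ powersetCard k univ, f s :=
  (sum_subtype _ (fun _ => mem_powersetCard_univ) f).symm

variable (α) [DecidableEq α]

def inclusionMatrix (k : ℕ) :
    Matrix {t : Finset α // #t = k + 1} {s : Finset α // #s = k} ℝ :=
  Matrix.of fun t s => if s.1 ⊆ t.1 then 1 else 0

variable {α}

theorem transpose_inclusionMatrix_mul_apply (k : ℕ) (x y : {s : Finset α // #s = k}) :
    ((inclusionMatrix α k)ᵀ * inclusionMatrix α k) x y =
      #{z ∈ powersetCard (k + 1) univ | x.1 ∪ y.1 ⊆ z} := by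
  simp only [mul_apply, transpose_apply, inclusionMatrix, of_apply, ite_zero_mul_ite_zero,
    mul_one, ← union_subset_iff]
  rw [sum_subtype_card_eq_sum_powersetCard (k + 1) fun z => if x.1 ∪ y.1 ⊆ z then 1 else 0,
    sum_boole]

theorem inclusionMatrix_mul_transpose_apply (k : ℕ) (x y : {t : Finset α // #t = k + 1}) :
    (inclusionMatrix α k * (inclusionMatrix α k)ᵀ) x y = (#(x.1 ∩ y.1)).choose k := by
  simp only [mul_apply, transpose_apply, inclusionMatrix, of_apply, ite_zero_mul_ite_zero,
    mul_one, ← subset_inter_iff]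
  rw [sum_subtype_card_eq_sum_powersetCard k fun w => if w ⊆ x.1 ∩ y.1 then 1 else 0, sum_boole,
    ← card_powersetCard]
  congr 2
  ext w
  simp only [mem_filter, mem_powersetCard, subset_univ, true_and, and_comm]

theorem transpose_inclusionMatrix_mul_zero :
    (inclusionMatrix α 0)ᵀ * inclusionMatrix α 0 = (Fintype.card α : ℝ) • 1 := by
  ext x y
  obtain rfl : x = y := Subtype.ext <| by rw [card_eq_zero.mp x.2, card_eq_zero.mp y.2]
  rw [transpose_inclusionMatrix_mul_apply, union_self,
    card_filter_superset_powersetCard_succ x.2]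
  simp

/-- Both sides count, for `k + 1`-sets `x` and `y`, the common `k + 2`-supersets resp. common
`k`-subsets; for `x ≠ y` these are `x ∪ y` resp. `x ∩ y` if `#(x ∩ y) = k`, and none otherwise. -/
theorem transpose_inclusionMatrix_mul_succ (k : ℕ) :
    (inclusionMatrix α (k + 1))ᵀ * inclusionMatrix α (k + 1) =
      inclusionMatrix α k * (inclusionMatrix α k)ᵀ +
        ((Fintype.card α : ℝ) - 2 * (k + 1)) • 1 := by
  ext x y
  rw [transpose_inclusionMatrix_mul_apply, Matrix.add_apply, inclusionMatrix_mul_transpose_apply,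
    Matrix.smul_apply, one_apply]
  by_cases hxy : x = y
  · subst hxy
    have hx : k + 1 ≤ Fintype.card α := x.2 ▸ card_le_univ x.1
    rw [if_pos rfl, union_self, card_filter_superset_powersetCard_succ x.2, inter_self, x.2,
      Nat.choose_succ_self_right]
    push_cast [hx]
    ring
  · rw [if_neg hxy, card_filter_union_subset_powersetCard x.2 y.2 (Subtype.coe_ne_coe.mpr hxy)]
    simp

theorem posDef_transpose_inclusionMatrix_mul {k : ℕ} (hk : 2 * k < Fintype.card α) :
    ((inclusionMatrix α k)ᵀ * inclusionMatrix α k).PosDef := by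
  cases k with
  | zero =>
    rw [transpose_inclusionMatrix_mul_zero]
    exact PosDef.one.smul (by exact_mod_cast hk)
  | succ k =>
    rw [transpose_inclusionMatrix_mul_succ]
    have hc : (0 : ℝ) < Fintype.card α - 2 * (k + 1) := by
      rw [sub_pos]; exact_mod_cast hk
    have hpsd := posSemidef_self_mul_conjTranspose (inclusionMatrix α k)
    rw [conjTranspose_eq_transpose_of_trivial] at hpsd
    exact PosDef.posSemidef_add hpsd (PosDef.one.smul hc)

theorem ker_inclusionMatrix {k : ℕ} (hk : 2 * k < Fintype.card α) :
    LinearMap.ker (inclusionMatrix α k).mulVecLin = ⊥ := by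
  rw [← ker_mulVecLin_transpose_mul_self, ker_mulVecLin_eq_bot_iff]
  exact fun v hv => mulVec_injective_iff_isUnit.mpr
    (posDef_transpose_inclusionMatrix_mul hk).isUnit (hv.trans (mulVec_zero _).symm)

theorem finrank_ker_transpose_inclusionMatrix {k : ℕ} (hk : 2 * k < Fintype.card α) :
    finrank ℝ (LinearMap.ker (inclusionMatrix α k)ᵀ.mulVecLin) =
      (Fintype.card α).choose (k + 1) - (Fintype.card α).choose k := by
  have hW := LinearMap.finrank_range_add_finrank_ker (inclusionMatrix α k).mulVecLin
  have hWt := LinearMap.finrank_range_add_finrank_ker (inclusionMatrix α k)ᵀ.mulVecLin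
  have hrank : (inclusionMatrix α k)ᵀ.rank = (inclusionMatrix α k).rank := rank_transpose _
  rw [ker_inclusionMatrix hk, finrank_bot] at hW
  simp only [rank, finrank_pi, Fintype.card_finset_len] at hW hWt hrank
  omega

-- With `r = k + 1` this is the paper's `(r - t)(n - r - t + 1)`.
def upDownEigenvalue (n k t : ℕ) : ℝ := ((k : ℝ) + 1 - t) * ((n : ℝ) - k - t)

theorem upDownEigenvalue_succ (n k t : ℕ) :
    upDownEigenvalue n (k + 1) t = upDownEigenvalue n k t + ((n : ℝ) - 2 * (k + 1)) := by
  unfold upDownEigenvalue; push_cast; ring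

theorem upDownEigenvalue_succ_right_self (n k : ℕ) : upDownEigenvalue n k (k + 1) = 0 := by
  unfold upDownEigenvalue; push_cast; ring

theorem upDownEigenvalue_pos {n k t : ℕ} (hk : 2 * k < n) (ht : t ≤ k) :
    0 < upDownEigenvalue n k t := by
  have ht' : (t : ℝ) ≤ k := by exact_mod_cast ht
  have hk' : 2 * (k : ℝ) + 1 ≤ n := by exact_mod_cast hk
  unfold upDownEigenvalue
  apply mul_pos <;> linarith

/-- In the inductive step the new eigenvalue `n - 2(k+1)` of `Wₖ₊₁ᵀ Wₖ₊₁` comes from `ker Wₖᵀ`;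
the others are those of `Wₖᵀ Wₖ`, shifted by `n - 2(k+1)`. -/
theorem finrank_eigenspace_transpose_inclusionMatrix_mul {k t : ℕ}
    (hk : 2 * k ≤ Fintype.card α) (ht : t ≤ k) :
    finrank ℝ (End.eigenspace (toLin' ((inclusionMatrix α k)ᵀ * inclusionMatrix α k))
      (upDownEigenvalue (Fintype.card α) k t)) = dimV (Fintype.card α) t := by
  induction k generalizing t with
  | zero =>
    obtain rfl : t = 0 := Nat.le_zero.mp ht
    have htop : End.eigenspace
        (toLin' ((Fintype.card α : ℝ) • (1 : Matrix {s : Finset α // #s = 0} _ ℝ)))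
        (upDownEigenvalue (Fintype.card α) 0 0) = ⊤ :=
      eq_top_iff.mpr fun v _ => mem_eigenspace_toLin'.mpr (by
        simp [upDownEigenvalue, smul_mulVec])
    rw [transpose_inclusionMatrix_mul_zero, htop, finrank_top, finrank_pi,
      Fintype.card_finset_len, Nat.choose_zero_right, dimV, if_pos rfl]
  | succ k ih =>
    rw [transpose_inclusionMatrix_mul_succ, upDownEigenvalue_succ,
      eigenspace_toLin'_add_smul_one]
    rcases ht.lt_or_eq with ht | rfl
    · rw [finrank_eigenspace_mul_comm _ _ (upDownEigenvalue_pos (by omega) (by omega)).ne']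
      exact ih (by omega) (by omega)
    · have hker := ker_mulVecLin_transpose_mul_self (inclusionMatrix α k)ᵀ
      rw [transpose_transpose] at hker
      rw [upDownEigenvalue_succ_right_self, End.eigenspace_zero, toLin'_apply', hker,
        finrank_ker_transpose_inclusionMatrix (by omega), dimV,
        if_neg k.succ_ne_zero, Nat.add_sub_cancel]

theorem exists_eq_upDownEigenvalue_of_hasEigenvalue {k : ℕ} {μ : ℝ}
    (h : End.HasEigenvalue (toLin' ((inclusionMatrix α k)ᵀ * inclusionMatrix α k)) μ) :
    ∃ t ≤ k, μ = upDownEigenvalue (Fintype.card α) k t := by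
  induction k generalizing μ with
  | zero =>
    rw [transpose_inclusionMatrix_mul_zero] at h
    obtain ⟨v, hv⟩ := h.exists_hasEigenvector
    have hμ := hv.apply_eq_smul
    rw [toLin'_apply, smul_mulVec, one_mulVec] at hμ
    exact ⟨0, le_rfl, by simpa [upDownEigenvalue] using (smul_left_injective ℝ hv.2 hμ).symm⟩
  | succ k ih =>
    set c : ℝ := (Fintype.card α : ℝ) - 2 * (k + 1)
    rw [transpose_inclusionMatrix_mul_succ, End.hasEigenvalue_iff, ← sub_add_cancel μ c,
      eigenspace_toLin'_add_smul_one, ← End.hasEigenvalue_iff] at h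
    by_cases hμ : μ - c = 0
    · exact ⟨k + 1, le_rfl, by
        rw [upDownEigenvalue_succ, upDownEigenvalue_succ_right_self, ← hμ, sub_add_cancel]⟩
    · obtain ⟨t, ht, hμt⟩ := ih ((hasEigenvalue_toLin'_mul_comm _ _ hμ).mp h)
      exact ⟨t, ht.trans k.le_succ, by rw [upDownEigenvalue_succ, ← hμt, sub_add_cancel]⟩

end InclusionMatrix

section HammingCube

variable {α : Type*} [Fintype α] [DecidableEq α]

def boolFunEquivFinset (α : Type*) [Fintype α] [DecidableEq α] : (α → Bool) ≃ Finset α where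
  toFun x := univ.filter fun i => x i = true
  invFun s i := decide (i ∈ s)
  left_inv x := by ext i; simp
  right_inv s := by ext i; simp

theorem hammingDist_boolFunEquivFinset_symm (s t : Finset α) :
    hammingDist ((boolFunEquivFinset α).symm s) ((boolFunEquivFinset α).symm t) =
      #(symmDiff s t) := by
  unfold hammingDist
  congr 1
  ext i
  by_cases hs : i ∈ s <;> by_cases ht : i ∈ t <;>
    simp [boolFunEquivFinset, mem_symmDiff, hs, ht]

-- `Iff.rfl`: `wt x` unfolds to `#(boolFunEquivFinset _ x)`.
def twoSphereEquiv (n k : ℕ) :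
    {x : Fin n → Bool // wt x = k ∨ wt x = k + 1} ≃
      {s : Finset (Fin n) // #s = k} ⊕ {s : Finset (Fin n) // #s = k + 1} :=
  ((boolFunEquivFinset (Fin n)).subtypeEquiv
    (q := fun s => #s = k ∨ #s = k + 1) fun _ => Iff.rfl).trans <|
    subtypeOrEquiv _ _ <| Pi.disjoint_iff.mpr fun _ => Prop.disjoint_iff.mpr fun h => by omega

theorem twoSphereEquiv_symm_inl {n k : ℕ} (s : {s : Finset (Fin n) // #s = k}) :
    ((twoSphereEquiv n k).symm (.inl s)).1 = (boolFunEquivFinset (Fin n)).symm s := rfl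

theorem twoSphereEquiv_symm_inr {n k : ℕ} (s : {s : Finset (Fin n) // #s = k + 1}) :
    ((twoSphereEquiv n k).symm (.inr s)).1 = (boolFunEquivFinset (Fin n)).symm s := rfl

theorem twoSphereAdj_eq_submatrix (n k : ℕ) :
    twoSphereAdj n (k + 1) = (fromBlocks 0 (inclusionMatrix (Fin n) k)ᵀ
      (inclusionMatrix (Fin n) k) 0).submatrix (twoSphereEquiv n k) (twoSphereEquiv n k) := by
  suffices h : ∀ a b, twoSphereAdj n (k + 1) ((twoSphereEquiv n k).symm a)
      ((twoSphereEquiv n k).symm b) = fromBlocks 0 (inclusionMatrix (Fin n) k)ᵀ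
        (inclusionMatrix (Fin n) k) 0 a b by
    ext u v
    simpa using h (twoSphereEquiv n k u) (twoSphereEquiv n k v)
  rintro (s | s) (t | t) <;>
    simp only [twoSphereAdj, twoSphereEquiv_symm_inl, twoSphereEquiv_symm_inr,
      hammingDist_boolFunEquivFinset_symm, fromBlocks_apply₁₁, fromBlocks_apply₁₂,
      fromBlocks_apply₂₁, fromBlocks_apply₂₂, transpose_apply, inclusionMatrix, of_apply,
      Matrix.zero_apply]
  · rw [if_neg (card_symmDiff_ne_one_of_card_eq (s.2.trans t.2.symm))]
  · simp only [card_symmDiff_eq_one_iff_subset (s := s.1) (t := t.1) (by rw [s.2, t.2])]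
  · rw [symmDiff_comm]
    simp only [card_symmDiff_eq_one_iff_subset (s := t.1) (t := s.1) (by rw [s.2, t.2])]
  · rw [if_neg (card_symmDiff_ne_one_of_card_eq (s.2.trans t.2.symm))]

theorem finrank_eigenspace_twoSphereAdj {n k : ℕ} {μ : ℝ} (hμ : μ ≠ 0) :
    finrank ℝ (End.eigenspace (toLin' (twoSphereAdj n (k + 1))) μ) =
      finrank ℝ (End.eigenspace
        (toLin' ((inclusionMatrix (Fin n) k)ᵀ * inclusionMatrix (Fin n) k)) (μ ^ 2)) := by
  rw [twoSphereAdj_eq_submatrix, finrank_eigenspace_submatrix_equiv,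
    finrank_eigenspace_fromBlocks_zero_zero _ _ hμ]

theorem finrank_eigenspace_zero_twoSphereAdj {n k : ℕ} (hk : 2 * k < n) :
    finrank ℝ (End.eigenspace (toLin' (twoSphereAdj n (k + 1))) 0) =
      n.choose (k + 1) - n.choose k := by
  have hk' : 2 * k < Fintype.card (Fin n) := by rwa [Fintype.card_fin]
  rw [twoSphereAdj_eq_submatrix, finrank_eigenspace_submatrix_equiv,
    finrank_eigenspace_zero_fromBlocks_zero_zero _ (ker_inclusionMatrix hk'),
    finrank_ker_transpose_inclusionMatrix hk', Fintype.card_fin]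

end HammingCube

theorem two_sphere_spectrum (n r : ℕ) (hr1 : 1 ≤ r) (hr : 2 * r ≤ n) :
    (∀ t ≤ r - 1,
      Module.finrank ℝ
          (Module.End.eigenspace (Matrix.toLin' (twoSphereAdj n r))
            (Real.sqrt (((r : ℝ) - t) * ((n : ℝ) - r - t + 1)))) = dimV n t ∧
      Module.finrank ℝ
          (Module.End.eigenspace (Matrix.toLin' (twoSphereAdj n r))
            (-Real.sqrt (((r : ℝ) - t) * ((n : ℝ) - r - t + 1)))) = dimV n t) ∧
    Module.finrank ℝ
        (Module.End.eigenspace (Matrix.toLin' (twoSphereAdj n r)) 0) =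
      Nat.choose n r - Nat.choose n (r - 1) ∧
    ∀ μ : ℝ, Module.End.HasEigenvalue (Matrix.toLin' (twoSphereAdj n r)) μ →
      μ = 0 ∨ ∃ t ≤ r - 1,
        μ = Real.sqrt (((r : ℝ) - t) * ((n : ℝ) - r - t + 1)) ∨
        μ = -Real.sqrt (((r : ℝ) - t) * ((n : ℝ) - r - t + 1)) := by
  obtain ⟨k, rfl⟩ : ∃ k, r = k + 1 := ⟨r - 1, by omega⟩
  have hev (t : ℕ) : ((((k + 1 : ℕ) : ℝ) - t) * ((n : ℝ) - (k + 1 : ℕ) - t + 1)) =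
      upDownEigenvalue n k t := by
    unfold upDownEigenvalue; push_cast; ring
  have hpos {t : ℕ} (ht : t ≤ k) : 0 < upDownEigenvalue n k t := upDownEigenvalue_pos (by omega) ht
  have hsqrt {t : ℕ} (ht : t ≤ k) {μ : ℝ} (hμ : μ ^ 2 = upDownEigenvalue n k t) :
      finrank ℝ (End.eigenspace (toLin' (twoSphereAdj n (k + 1))) μ) = dimV n t := by
    have hμ0 : μ ≠ 0 := by rintro rfl; linarith [hpos ht]
    have h := finrank_eigenspace_transpose_inclusionMatrix_mul (α := Fin n) (by simp; omega) ht
    rwa [Fintype.card_fin, ← hμ, ← finrank_eigenspace_twoSphereAdj hμ0] at h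
  refine ⟨fun t ht => ⟨?_, ?_⟩, by simpa using finrank_eigenspace_zero_twoSphereAdj (by omega),
    fun μ hμ => ?_⟩
  · rw [hev]
    exact hsqrt (by omega) (Real.sq_sqrt (hpos (by omega)).le)
  · rw [hev]
    exact hsqrt (by omega) (by rw [neg_sq, Real.sq_sqrt (hpos (by omega)).le])
  · by_cases hμ0 : μ = 0
    · exact Or.inl hμ0
    rw [End.hasEigenvalue_iff_finrank_pos, finrank_eigenspace_twoSphereAdj hμ0,
      ← End.hasEigenvalue_iff_finrank_pos] at hμ
    obtain ⟨t, ht, hμt⟩ := exists_eq_upDownEigenvalue_of_hasEigenvalue hμ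
    rw [Fintype.card_fin] at hμt
    refine Or.inr ⟨t, by omega, ?_⟩
    rw [hev, ← hμt, Real.sqrt_sq_eq_abs]
    rcases abs_choice μ with h | h
    · exact Or.inl h.symm
    · exact Or.inr (by rw [h, neg_neg])
end

section
/- For all 0 < x < 1, 2\sqrt{H^{-1}(x)(1 - H^{-1}(x))} > x, where H is the binary entropy function and H^{-1} : [0,1] \to [0,1/2] is its inverse. -/
/-!
Work in nats, with `h = Real.binEntropy` and `w = 2 √(p (1 - p))`; the claim is `h p < w log 2`
for `0 < p < 1/2`. Two estimates cover overlapping ranges of `w`.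

* The logarithmic mean dominates the geometric one (`u ≤ sinh u`), i.e. `-log q ≤ (1 - q) / √q`.
  Applied to `q = p` and `q = 1 - p` this gives `h p ≤ (w / 2) (√p + √(1 - p)) = (w / 2) √(1 + w)`,
  which is below `w log 2` as long as `1 + w < 4 (log 2)²`.
* With `z = 1 - 2p`, the series `(1 + z) log (1 + z) + (1 - z) log (1 - z) = ∑ z^(2k) / (k (2k - 1))`
  has nonnegative terms, so it is at least `z² = 1 - w²`. This gives `h p ≤ log 2 - (1 - w²) / 2`,
  which is below `w log 2` as long as `2 log 2 - 1 < w < 1`.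

The first estimate is used for `w ≤ 1/2`, the second for `w > 1/2`.
-/

/-- The binary entropy function. -/
noncomputable def binEntropy (p : ℝ) : ℝ :=
  p * Real.logb 2 (1 / p) + (1 - p) * Real.logb 2 (1 / (1 - p))

lemma neg_log_le_one_sub_div_sqrt {q : ℝ} (hq₀ : 0 < q) (hq₁ : q ≤ 1) :
    -Real.log q ≤ (1 - q) / √q := by
  have ht₀ : 0 < √q := Real.sqrt_pos.2 hq₀
  have hlog : 0 ≤ -Real.log √q :=
    neg_nonneg.2 (Real.log_nonpos ht₀.le (Real.sqrt_le_one.2 hq₁))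
  have hsinh := Real.self_le_sinh_iff.2 hlog
  rw [Real.sinh_eq, neg_neg, Real.exp_neg, Real.exp_log ht₀] at hsinh
  calc -Real.log q = 2 * -Real.log √q := by rw [Real.log_sqrt hq₀.le]; ring
    _ ≤ (√q)⁻¹ - √q := by linarith
    _ = (1 - q) / √q := by field_simp; rw [Real.sq_sqrt hq₀.le]

lemma sq_le_one_add_mul_log_one_add_add_one_sub_mul_log_one_sub {z : ℝ} (hz : |z| < 1) :
    z ^ 2 ≤ (1 + z) * Real.log (1 + z) + (1 - z) * Real.log (1 - z) := by
  have hz2 : |z ^ 2| < 1 := by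
    rw [abs_pow]; exact pow_lt_one₀ (abs_nonneg z) hz two_ne_zero
  have hsum : HasSum (fun k : ℕ => (z ^ 2) ^ (k + 1) / ((2 * k + 1) * (k + 1)))
      (z * (Real.log (1 + z) - Real.log (1 - z)) - -Real.log (1 - z ^ 2)) := by
    refine (((Real.hasSum_log_sub_log_of_abs_lt_one hz).mul_left z).sub
      (Real.hasSum_pow_div_log_of_abs_lt_one hz2)).congr_fun fun k => ?_
    field_simp
    ring
  have h₁ : 0 < 1 + z := by linarith [neg_abs_le z]
  have h₂ : 0 < 1 - z := by linarith [le_abs_self z]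
  calc z ^ 2 = (z ^ 2) ^ (0 + 1) / ((2 * (0 : ℕ) + 1) * ((0 : ℕ) + 1)) := by simp
    _ ≤ z * (Real.log (1 + z) - Real.log (1 - z)) - -Real.log (1 - z ^ 2) :=
        le_hasSum hsum 0 fun k _ => by positivity
    _ = (1 + z) * Real.log (1 + z) + (1 - z) * Real.log (1 - z) := by
        rw [show 1 - z ^ 2 = (1 + z) * (1 - z) by ring, Real.log_mul h₁.ne' h₂.ne']
        ring

lemma binEntropy_le_sqrt_mul_sqrt_mul_add {p : ℝ} (hp₀ : 0 < p) (hp₁ : p < 1) :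
    Real.binEntropy p ≤ √p * √(1 - p) * (√p + √(1 - p)) := by
  have hq₀ : 0 < 1 - p := sub_pos.2 hp₁
  have h₁ := mul_le_mul_of_nonneg_left (neg_log_le_one_sub_div_sqrt hp₀ hp₁.le) hp₀.le
  have h₂ := mul_le_mul_of_nonneg_left
    (neg_log_le_one_sub_div_sqrt hq₀ (sub_le_self 1 hp₀.le)) hq₀.le
  calc Real.binEntropy p = p * -Real.log p + (1 - p) * -Real.log (1 - p) := by
        simp only [Real.binEntropy, Real.log_inv]
    _ ≤ p * ((1 - p) / √p) + (1 - p) * ((1 - (1 - p)) / √(1 - p)) := add_le_add h₁ h₂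
    _ = √p * √(1 - p) * (√p + √(1 - p)) := by
        field_simp
        rw [Real.sq_sqrt hp₀.le, Real.sq_sqrt hq₀.le]
        ring

lemma binEntropy_le_log_two_sub {p : ℝ} (hp₀ : 0 < p) (hp₁ : p < 1) :
    Real.binEntropy p ≤ Real.log 2 - (1 - 2 * p) ^ 2 / 2 := by
  have hz : |1 - 2 * p| < 1 := abs_lt.2 ⟨by linarith, by linarith⟩
  have h := sq_le_one_add_mul_log_one_add_add_one_sub_mul_log_one_sub hz
  rw [show 1 + (1 - 2 * p) = 2 * (1 - p) by ring, show 1 - (1 - 2 * p) = 2 * p by ring,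
    Real.log_mul two_ne_zero (sub_pos.2 hp₁).ne', Real.log_mul two_ne_zero hp₀.ne'] at h
  simp only [Real.binEntropy, Real.log_inv]
  linarith

lemma binEntropy_lt_two_mul_sqrt_mul_log_two {p : ℝ} (hp₀ : 0 < p) (hp₁ : p < 1)
    (hp : p ≠ 2⁻¹) : Real.binEntropy p < 2 * √(p * (1 - p)) * Real.log 2 := by
  have hq₀ : 0 < 1 - p := sub_pos.2 hp₁
  have hs : √p ^ 2 = p := Real.sq_sqrt hp₀.le
  have hc : √(1 - p) ^ 2 = 1 - p := Real.sq_sqrt hq₀.le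
  have hsc : 0 < √p * √(1 - p) := mul_pos (Real.sqrt_pos.2 hp₀) (Real.sqrt_pos.2 hq₀)
  have hlog₁ := Real.log_two_gt_d9
  have hlog₂ := Real.log_two_lt_d9
  rw [Real.sqrt_mul hp₀.le]
  rcases le_or_gt (√p * √(1 - p)) 4⁻¹ with hsmall | hlarge
  · have hsum : √p + √(1 - p) < 2 * Real.log 2 := by nlinarith
    calc Real.binEntropy p ≤ √p * √(1 - p) * (√p + √(1 - p)) :=
          binEntropy_le_sqrt_mul_sqrt_mul_add hp₀ hp₁
      _ < √p * √(1 - p) * (2 * Real.log 2) := mul_lt_mul_of_pos_left hsum hsc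
      _ = 2 * (√p * √(1 - p)) * Real.log 2 := by ring
  · have hz : (1 - 2 * p) ^ 2 = 1 - (2 * (√p * √(1 - p))) ^ 2 := by
      rw [mul_pow, mul_pow, hs, hc]; ring
    have hw₁ : 2 * (√p * √(1 - p)) < 1 := by
      nlinarith [sq_pos_of_ne_zero (show 1 - 2 * p ≠ 0 by contrapose! hp; linarith)]
    have hw₂ : Real.log 2 < (1 + 2 * (√p * √(1 - p))) / 2 := by linarith
    nlinarith [binEntropy_le_log_two_sub hp₀ hp₁, mul_pos (sub_pos.2 hw₁) (sub_pos.2 hw₂)]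

lemma binEntropy_eq_binEntropy_div_log_two (p : ℝ) :
    binEntropy p = Real.binEntropy p / Real.log 2 := by
  simp only [binEntropy, Real.binEntropy, Real.logb, one_div]
  ring

theorem sqrt_gt_entropy_inv (x p : ℝ) (hx0 : 0 < x) (hx1 : x < 1)
    (hp0 : 0 ≤ p) (hp : p ≤ 1 / 2) (hpx : binEntropy p = x) :
    2 * Real.sqrt (p * (1 - p)) > x := by
  have hlog : 0 < Real.log 2 := Real.log_pos one_lt_two
  rw [binEntropy_eq_binEntropy_div_log_two] at hpx
  have hp₀ : 0 < p := by
    refine hp0.lt_of_ne ?_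
    rintro rfl
    simp only [Real.binEntropy_zero, zero_div] at hpx
    linarith
  have hp₁ : p ≠ 2⁻¹ := by
    rintro rfl
    rw [Real.binEntropy_two_inv, div_self hlog.ne'] at hpx
    linarith
  rw [← hpx, gt_iff_lt, div_lt_iff₀ hlog]
  exact binEntropy_lt_two_mul_sqrt_mul_log_two hp₀ (by linarith) hp₁
end
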